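/- Let (A⁺, A⁻) be a dense subpair of (Hom_Δ(M⁻, M⁺), Hom_Δ(M⁺, M⁻)). Then the socle Soc(A⁺) — the additive subgroup of A⁺ generated by the union of all minimal right ideals of the pair contained in A⁺ — is exactly the set of elements of A⁺ of finite rank. -/

import Mathlib

/-- `(A⁺, A⁻)` is a dense subpair of `(Hom_Δ(M⁻, M⁺), Hom_Δ(M⁺, M⁻))`. -/
def IsDenseSubpair {Δ Mp Mm : Type*} [DivisionRing Δ]
    [AddCommGroup Mp] [Module Δ Mp] [AddCommGroup Mm] [Module Δ Mm]
    (Ap : Set (Mm →ₗ[Δ] Mp)) (Am : Set (Mp →ₗ[Δ] Mm)) : Prop :=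
  (0 ∈ Ap) ∧ (∀ x ∈ Ap, ∀ y ∈ Ap, x + y ∈ Ap) ∧ (∀ x ∈ Ap, -x ∈ Ap) ∧
  (0 ∈ Am) ∧ (∀ x ∈ Am, ∀ y ∈ Am, x + y ∈ Am) ∧ (∀ x ∈ Am, -x ∈ Am) ∧
  (∀ x ∈ Ap, ∀ y ∈ Am, ∀ z ∈ Ap, x ∘ₗ (y ∘ₗ z) ∈ Ap) ∧
  (∀ x ∈ Am, ∀ y ∈ Ap, ∀ z ∈ Am, x ∘ₗ (y ∘ₗ z) ∈ Am) ∧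
  (∀ (k : ℕ) (m : Fin k → Mm), LinearIndependent Δ m →
    ∀ n : Fin k → Mp, ∃ x ∈ Ap, ∀ i, x (m i) = n i) ∧
  (∀ (k : ℕ) (m : Fin k → Mp), LinearIndependent Δ m →
    ∀ n : Fin k → Mm, ∃ x ∈ Am, ∀ i, x (m i) = n i)

/-- A right ideal of the pair `(A⁺, A⁻)` contained in `A⁺`: an additive subgroup `L ⊆ A⁺`
with `l ∘ y ∘ z ∈ L` for all `l ∈ L`, `y ∈ A⁻`, `z ∈ A⁺`. -/
def IsRightIdealP {Δ Mp Mm : Type*} [DivisionRing Δ]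
    [AddCommGroup Mp] [Module Δ Mp] [AddCommGroup Mm] [Module Δ Mm]
    (Ap : Set (Mm →ₗ[Δ] Mp)) (Am : Set (Mp →ₗ[Δ] Mm))
    (L : AddSubgroup (Mm →ₗ[Δ] Mp)) : Prop :=
  (L : Set (Mm →ₗ[Δ] Mp)) ⊆ Ap ∧
  ∀ l ∈ L, ∀ y ∈ Am, ∀ z ∈ Ap, l ∘ₗ (y ∘ₗ z) ∈ L

/-- A minimal right ideal of the pair contained in `A⁺`: a nonzero right ideal containing no
right ideals other than `0` and itself. -/
def IsMinimalRightIdealP {Δ Mp Mm : Type*} [DivisionRing Δ]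
    [AddCommGroup Mp] [Module Δ Mp] [AddCommGroup Mm] [Module Δ Mm]
    (Ap : Set (Mm →ₗ[Δ] Mp)) (Am : Set (Mp →ₗ[Δ] Mm))
    (L : AddSubgroup (Mm →ₗ[Δ] Mp)) : Prop :=
  IsRightIdealP Ap Am L ∧ L ≠ ⊥ ∧
  ∀ L' : AddSubgroup (Mm →ₗ[Δ] Mp), IsRightIdealP Ap Am L' → L' ≤ L → L' = ⊥ ∨ L' = L

section SocleAux

variable {Δ Mp Mm : Type*} [DivisionRing Δ]
    [AddCommGroup Mp] [Module Δ Mp] [AddCommGroup Mm] [Module Δ Mm]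

def idealGen (Ap : Set (Mm →ₗ[Δ] Mp)) (Am : Set (Mp →ₗ[Δ] Mm)) (t : Mm →ₗ[Δ] Mp) :
    AddSubgroup (Mm →ₗ[Δ] Mp) :=
  AddSubgroup.closure ({t} ∪ {w | ∃ y ∈ Am, ∃ z ∈ Ap, w = t ∘ₗ (y ∘ₗ z)})

variable {Ap : Set (Mm →ₗ[Δ] Mp)} {Am : Set (Mp →ₗ[Δ] Mm)}

lemma mem_idealGen_self (t : Mm →ₗ[Δ] Mp) : t ∈ idealGen Ap Am t :=
  AddSubgroup.subset_closure (Or.inl rfl)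

lemma idealGen_le {L : AddSubgroup (Mm →ₗ[Δ] Mp)} (hL : IsRightIdealP Ap Am L)
    {t : Mm →ₗ[Δ] Mp} (ht : t ∈ L) : idealGen Ap Am t ≤ L := by
  refine (AddSubgroup.closure_le _).2 ?_
  rintro w (rfl | ⟨y, hy, z, hz, rfl⟩)
  · exact ht
  · exact hL.2 t ht y hy z hz

lemma idealGen_isRightIdeal (hd : IsDenseSubpair Ap Am) {t : Mm →ₗ[Δ] Mp} (ht : t ∈ Ap) :
    IsRightIdealP Ap Am (idealGen Ap Am t) := by
  obtain ⟨h0p, haddp, hnegp, h0m, haddm, hnegm, htp, htm, -, -⟩ := hd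
  constructor
  · intro x hx
    refine AddSubgroup.closure_induction ?_ h0p ?_ ?_ hx
    · rintro w (rfl | ⟨y, hy, z, hz, rfl⟩)
      · exact ht
      · exact htp t ht y hy z hz
    · intro a b _ _ ha hb; exact haddp a ha b hb
    · intro a _ ha; exact hnegp a ha
  · intro l hl y hy z hz
    refine AddSubgroup.closure_induction
      (p := fun l _ => ∀ y ∈ Am, ∀ z ∈ Ap, l ∘ₗ (y ∘ₗ z) ∈ idealGen Ap Am t)
      ?_ ?_ ?_ ?_ hl y hy z hz
    · rintro w (rfl | ⟨y', hy', z', hz', rfl⟩) <;> intro y hy z hz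
      · exact AddSubgroup.subset_closure (Or.inr ⟨y, hy, z, hz, rfl⟩)
      · refine AddSubgroup.subset_closure
          (Or.inr ⟨y' ∘ₗ (z' ∘ₗ y), htm y' hy' z' hz' y hy, z, hz, ?_⟩)
        ext m; simp [LinearMap.comp_apply]
    · intro y hy z hz; rw [LinearMap.zero_comp]; exact zero_mem _
    · intro a b _ _ ha hb y hy z hz
      rw [LinearMap.add_comp]; exact add_mem (ha y hy z hz) (hb y hy z hz)
    · intro a _ ha y hy z hz
      rw [LinearMap.neg_comp]; exact neg_mem (ha y hy z hz)

lemma idealGen_apply_mem {V : Submodule Δ Mp} {t : Mm →ₗ[Δ] Mp} (hV : ∀ m, t m ∈ V) :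
    ∀ x ∈ idealGen Ap Am t, ∀ m, x m ∈ V := by
  intro x hx
  refine AddSubgroup.closure_induction (p := fun x _ => ∀ m, x m ∈ V) ?_ ?_ ?_ ?_ hx
  · rintro w (rfl | ⟨y, hy, z, hz, rfl⟩) m
    · exact hV m
    · simpa [LinearMap.comp_apply] using hV (y (z m))
  · intro m; simp
  · intro a b _ _ ha hb m; rw [LinearMap.add_apply]; exact V.add_mem (ha m) (hb m)
  · intro a _ ha m; rw [LinearMap.neg_apply]; exact V.neg_mem (ha m)

lemma exists_factor (hd : IsDenseSubpair Ap Am) {t : Mm →ₗ[Δ] Mp} {y₀ : Mp →ₗ[Δ] Mm}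
    (hy₀ : y₀ ∈ Am) (e : Mm →ₗ[Δ] Mp) :
    ∀ x ∈ idealGen Ap Am t, ∃ yb2 ∈ Am, x ∘ₗ (y₀ ∘ₗ e) = t ∘ₗ (yb2 ∘ₗ e) := by
  obtain ⟨-, -, -, h0m, haddm, hnegm, -, htm, -, -⟩ := hd
  intro x hx
  refine AddSubgroup.closure_induction
    (p := fun x _ => ∃ yb2 ∈ Am, x ∘ₗ (y₀ ∘ₗ e) = t ∘ₗ (yb2 ∘ₗ e)) ?_ ?_ ?_ ?_ hx
  · rintro w (rfl | ⟨y, hy, z, hz, rfl⟩)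
    · exact ⟨y₀, hy₀, rfl⟩
    · exact ⟨y ∘ₗ (z ∘ₗ y₀), htm y hy z hz y₀ hy₀, by ext m; simp [LinearMap.comp_apply]⟩
  · exact ⟨0, h0m, by simp⟩
  · rintro a b _ _ ⟨ya, hya, ha⟩ ⟨yb, hyb, hb⟩
    refine ⟨ya + yb, haddm _ hya _ hyb, ?_⟩
    rw [LinearMap.add_comp, LinearMap.add_comp, LinearMap.comp_add, ha, hb]
  · rintro a _ ⟨ya, hya, ha⟩
    refine ⟨-ya, hnegm _ hya, ?_⟩
    rw [LinearMap.neg_comp, ha, LinearMap.neg_comp, LinearMap.comp_neg]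



lemma minimal_finite (hd : IsDenseSubpair Ap Am) {L : AddSubgroup (Mm →ₗ[Δ] Mp)}
    (hmin : IsRightIdealP Ap Am L ∧ L ≠ ⊥ ∧
      ∀ L' : AddSubgroup (Mm →ₗ[Δ] Mp), IsRightIdealP Ap Am L' → L' ≤ L → L' = ⊥ ∨ L' = L) :
    ∀ x ∈ L, Module.Finite Δ (LinearMap.range x) := by
  obtain ⟨⟨hLsub, hLri⟩, hLne, hLmin⟩ := hmin
  have hdc := hd
  obtain ⟨h0p, haddp, hnegp, h0m, haddm, hnegm, htp, htm, hdp, hdm⟩ := hdc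
  -- a nonzero element
  obtain ⟨l, hlL, hl0⟩ : ∃ l ∈ L, l ≠ 0 := by
    by_contra h; push_neg at h
    exact hLne ((AddSubgroup.eq_bot_iff_forall L).2 h)
  obtain ⟨m₀, hm₀⟩ : ∃ m, l m ≠ 0 := by
    by_contra h; push_neg at h; exact hl0 (LinearMap.ext h)
  -- y₀ with y₀ (l m₀) = m₀
  obtain ⟨y₀, hy₀Am, hy₀⟩ := hdm 1 ![l m₀] (linearIndependent_unique_iff.2 (by simpa using hm₀)) ![m₀]
  have hy₀v : y₀ (l m₀) = m₀ := by simpa using hy₀ 0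
  -- kernel ideal is ⊥
  have hJ : ∀ x ∈ L, l ∘ₗ (y₀ ∘ₗ x) = 0 → x = 0 := by
    set J : AddSubgroup (Mm →ₗ[Δ] Mp) :=
      { carrier := {x | x ∈ L ∧ l ∘ₗ (y₀ ∘ₗ x) = 0}
        zero_mem' := ⟨zero_mem _, by simp⟩
        add_mem' := by
          rintro a b ⟨haL, ha⟩ ⟨hbL, hb⟩
          exact ⟨add_mem haL hbL, by rw [LinearMap.comp_add, LinearMap.comp_add, ha, hb, add_zero]⟩
        neg_mem' := by
          rintro a ⟨haL, ha⟩
          exact ⟨neg_mem haL, by rw [LinearMap.comp_neg, LinearMap.comp_neg, ha, neg_zero]⟩ } with hJdef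
    have hJri : IsRightIdealP Ap Am J := by
      constructor
      · intro x hx; exact hLsub hx.1
      · rintro x ⟨hxL, hx0⟩ y hy z hz
        refine ⟨hLri x hxL y hy z hz, ?_⟩
        have : l ∘ₗ (y₀ ∘ₗ (x ∘ₗ (y ∘ₗ z))) = (l ∘ₗ (y₀ ∘ₗ x)) ∘ₗ (y ∘ₗ z) := by
          ext m; simp [LinearMap.comp_apply]
        rw [this, hx0, LinearMap.zero_comp]
    have hJbot : J = ⊥ := by
      rcases hLmin J hJri (fun x hx => hx.1) with h | h
      · exact h
      · exfalso
        have hlJ : l ∈ J := h.symm ▸ hlL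
        have := LinearMap.congr_fun hlJ.2 m₀
        simp [LinearMap.comp_apply, hy₀v] at this
        exact hm₀ this
    intro x hxL hx0
    have : x ∈ J := ⟨hxL, hx0⟩
    rwa [hJbot, AddSubgroup.mem_bot] at this
  -- image ideal is L : get e
  obtain ⟨e, heL, hel⟩ : ∃ e ∈ L, l = l ∘ₗ (y₀ ∘ₗ e) := by
    set I : AddSubgroup (Mm →ₗ[Δ] Mp) :=
      { carrier := {w | ∃ x ∈ L, w = l ∘ₗ (y₀ ∘ₗ x)}
        zero_mem' := ⟨0, zero_mem _, by simp⟩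
        add_mem' := by
          rintro a b ⟨xa, hxa, rfl⟩ ⟨xb, hxb, rfl⟩
          exact ⟨xa + xb, add_mem hxa hxb, by rw [LinearMap.comp_add, LinearMap.comp_add]⟩
        neg_mem' := by
          rintro a ⟨xa, hxa, rfl⟩
          exact ⟨-xa, neg_mem hxa, by rw [LinearMap.comp_neg, LinearMap.comp_neg]⟩ } with hIdef
    have hIri : IsRightIdealP Ap Am I := by
      constructor
      · rintro w ⟨x, hxL, rfl⟩
        exact hLsub (hLri l hlL y₀ hy₀Am x (hLsub hxL))
      · rintro w ⟨x, hxL, rfl⟩ y hy z hz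
        refine ⟨x ∘ₗ (y ∘ₗ z), hLri x hxL y hy z hz, ?_⟩
        ext m; simp [LinearMap.comp_apply]
    have hIL : I ≤ L := by
      rintro w ⟨x, hxL, rfl⟩
      exact hLri l hlL y₀ hy₀Am x (hLsub hxL)
    rcases hLmin I hIri hIL with h | h
    · exfalso
      have : (l ∘ₗ (y₀ ∘ₗ l)) ∈ I := ⟨l, hlL, rfl⟩
      rw [h, AddSubgroup.mem_bot] at this
      have := LinearMap.congr_fun this m₀
      simp [LinearMap.comp_apply, hy₀v] at this
      exact hm₀ this
    · have : l ∈ I := h.symm ▸ hlL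
      obtain ⟨e, heL, he⟩ := this
      exact ⟨e, heL, he⟩
  have heAp : e ∈ Ap := hLsub heL
  have he0 : e ≠ 0 := by
    rintro rfl; apply hl0; rw [hel]; ext m; simp
  -- idempotency
  have heye : e ∘ₗ (y₀ ∘ₗ e) = e := by
    have h1 : e ∘ₗ (y₀ ∘ₗ e) ∈ L := hLri e heL y₀ hy₀Am e heAp
    have hl' : ∀ m, l m = l (y₀ (e m)) := by
      intro m; simpa [LinearMap.comp_apply] using LinearMap.congr_fun hel m
    have h2 : l ∘ₗ (y₀ ∘ₗ (e ∘ₗ (y₀ ∘ₗ e) - e)) = 0 := by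
      ext m
      simp only [LinearMap.comp_apply, LinearMap.sub_apply, LinearMap.zero_apply, map_sub]
      rw [← hl' (y₀ (e m)), ← hl' m, sub_self]
    have := hJ _ (sub_mem h1 heL) h2
    rwa [sub_eq_zero] at this
  have hee : ∀ m, e (y₀ (e m)) = e m := by
    intro m; simpa [LinearMap.comp_apply] using LinearMap.congr_fun heye m
  obtain ⟨m₁, hm₁⟩ : ∃ m, e m ≠ 0 := by
    by_contra h; push_neg at h; exact he0 (LinearMap.ext h)
  set w : Mp := e m₁ with hwdef
  -- any nonzero element of L generates L
  have keyIdeal : ∀ t ∈ L, t ≠ 0 → idealGen Ap Am t = L := by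
    intro t htL ht0
    rcases hLmin _ (idealGen_isRightIdeal hd (hLsub htL)) (idealGen_le ⟨hLsub, hLri⟩ htL)
      with h | h
    · exfalso
      have := mem_idealGen_self (Ap := Ap) (Am := Am) t
      rw [h, AddSubgroup.mem_bot] at this
      exact ht0 this
    · exact h
  -- the key claim : range e ≤ span {w}
  have hclaim : ∀ u : Mm, e u ∈ Submodule.span Δ {w} := by
    intro u
    by_contra hu
    have hw0 : w ≠ 0 := hm₁
    have heu0 : e u ≠ 0 := fun h => hu (h ▸ Submodule.zero_mem _)
    have hind2 : LinearIndependent Δ ![e u, w] := by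
      refine linearIndependent_fin2.2 ⟨by simpa using hw0, ?_⟩
      intro a ha
      simp only [Matrix.cons_val_one, Matrix.head_cons, Matrix.cons_val_zero] at ha
      exact hu (Submodule.mem_span_singleton.2 ⟨a, ha⟩)
    obtain ⟨y, hyAm, hy⟩ := hdm 2 ![e u, w] hind2 ![y₀ (e u), 0]
    have hyeu : y (e u) = y₀ (e u) := by simpa using hy 0
    have hyw : y w = 0 := by simpa using hy 1
    set a : Mm →ₗ[Δ] Mp := e ∘ₗ (y ∘ₗ e) with hadef
    have haL : a ∈ L := hLri e heL y hyAm e heAp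
    have hau : a u = e u := by
      simp only [hadef, LinearMap.comp_apply]
      rw [hyeu, hee u]
    have ha0 : a ≠ 0 := by
      intro h; rw [h] at hau; simp at hau; exact heu0 hau.symm
    have ham₁ : a m₁ = 0 := by
      simp only [hadef, LinearMap.comp_apply, ← hwdef]
      rw [hyw, map_zero]
    -- right inverse of a
    have heIa : e ∈ idealGen Ap Am a := (keyIdeal a haL ha0).symm ▸ heL
    obtain ⟨y1, hy1Am, hy1⟩ := exists_factor hd hy₀Am e e heIa
    have hfac1 : e = a ∘ₗ (y1 ∘ₗ e) := by rwa [heye] at hy1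
    have hfac1' : ∀ m, e m = a (y1 (e m)) := by
      intro m; simpa [LinearMap.comp_apply] using LinearMap.congr_fun hfac1 m
    set c : Mm →ₗ[Δ] Mp := e ∘ₗ (y1 ∘ₗ e) with hcdef
    have hcL : c ∈ L := hLri e heL y1 hy1Am e heAp
    -- a ⋆ c = e
    have hac : a ∘ₗ (y₀ ∘ₗ c) = e := by
      ext m
      simp only [LinearMap.comp_apply, hcdef, hadef]
      rw [hee (y1 (e m))]
      exact (hfac1' m).symm
    have hc0 : c ≠ 0 := by
      intro h; rw [h] at hac
      apply he0; rw [← hac]; ext m; simp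
    -- right inverse of c
    have heIc : e ∈ idealGen Ap Am c := (keyIdeal c hcL hc0).symm ▸ heL
    obtain ⟨y2, hy2Am, hy2⟩ := exists_factor hd hy₀Am e e heIc
    have hfac2 : e = c ∘ₗ (y2 ∘ₗ e) := by rwa [heye] at hy2
    have hfac2' : ∀ m, e m = c (y2 (e m)) := by
      intro m; simpa [LinearMap.comp_apply] using LinearMap.congr_fun hfac2 m
    set d : Mm →ₗ[Δ] Mp := e ∘ₗ (y2 ∘ₗ e) with hddef
    have hcd : c ∘ₗ (y₀ ∘ₗ d) = e := by
      ext m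
      simp only [LinearMap.comp_apply, hddef, hcdef]
      rw [hee (y2 (e m))]
      exact (hfac2' m).symm
    -- a = d
    have had : a = d := by
      have h1 : a ∘ₗ (y₀ ∘ₗ e) = a := by
        ext m; simp only [LinearMap.comp_apply, hadef]; rw [hee m]
      have h2 : e ∘ₗ (y₀ ∘ₗ d) = d := by
        ext m; simp only [LinearMap.comp_apply, hddef]; exact hee (y2 (e m))
      calc a = a ∘ₗ (y₀ ∘ₗ e) := h1.symm
        _ = a ∘ₗ (y₀ ∘ₗ (c ∘ₗ (y₀ ∘ₗ d))) := by rw [hcd]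
        _ = (a ∘ₗ (y₀ ∘ₗ c)) ∘ₗ (y₀ ∘ₗ d) := by ext m; simp [LinearMap.comp_apply]
        _ = e ∘ₗ (y₀ ∘ₗ d) := by rw [hac]
        _ = d := h2
    -- contradiction
    have hca : c ∘ₗ (y₀ ∘ₗ a) = e := by rw [had]; exact hcd
    have := LinearMap.congr_fun hca m₁
    simp only [LinearMap.comp_apply, ham₁, map_zero] at this
    exact hm₁ this.symm
  -- conclude
  intro x hxL
  have hxe : ∀ m, x m ∈ Submodule.span Δ {w} := by
    have hx' : x ∈ idealGen Ap Am e := (keyIdeal e heL he0).symm ▸ hxL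
    exact idealGen_apply_mem hclaim x hx'
  have hle : LinearMap.range x ≤ Submodule.span Δ {w} := by
    rintro p hp
    obtain ⟨m, rfl⟩ := LinearMap.mem_range.1 hp
    exact hxe m
  haveI : Module.Finite Δ (Submodule.span Δ {w}) :=
    Module.Finite.iff_fg.2 (Submodule.fg_span_singleton w)
  exact Submodule.finiteDimensional_of_le hle

end SocleAux

/-- Let `(A⁺, A⁻)` be a dense subpair of `(Hom_Δ(M⁻, M⁺), Hom_Δ(M⁺, M⁻))`.
Then the socle `Soc(A⁺)` — the additive subgroup of `A⁺` generated by the union of all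
minimal right ideals of the pair contained in `A⁺` — is exactly the set of elements of `A⁺`
of finite rank. -/
theorem stmt_15 {Δ Mp Mm : Type*} [DivisionRing Δ]
    [AddCommGroup Mp] [Module Δ Mp] [AddCommGroup Mm] [Module Δ Mm]
    (Ap : Set (Mm →ₗ[Δ] Mp)) (Am : Set (Mp →ₗ[Δ] Mm))
    (hdense : IsDenseSubpair Ap Am) :
    (AddSubgroup.closure {x : Mm →ₗ[Δ] Mp |
        ∃ L : AddSubgroup (Mm →ₗ[Δ] Mp), IsMinimalRightIdealP Ap Am L ∧ x ∈ L} :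
      Set (Mm →ₗ[Δ] Mp)) =
    {x : Mm →ₗ[Δ] Mp | x ∈ Ap ∧ Module.Finite Δ ↥(LinearMap.range x)} := by
  have hd := hdense
  obtain ⟨h0p, haddp, hnegp, h0m, haddm, hnegm, htp, htm, hdp, hdm⟩ := hdense
  apply Set.Subset.antisymm
  · -- socle ⊆ finite rank
    set F : AddSubgroup (Mm →ₗ[Δ] Mp) :=
      { carrier := {x | x ∈ Ap ∧ Module.Finite Δ ↥(LinearMap.range x)}
        zero_mem' := ⟨h0p, by
          rw [LinearMap.range_zero]
          exact Module.Finite.iff_fg.2 Submodule.fg_bot⟩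
        add_mem' := by
          rintro a b ⟨haA, haF⟩ ⟨hbA, hbF⟩
          refine ⟨haddp _ haA _ hbA, ?_⟩
          haveI := haF; haveI := hbF
          have hle : LinearMap.range (a + b) ≤ LinearMap.range a ⊔ LinearMap.range b := by
            rintro p hp
            obtain ⟨m, rfl⟩ := LinearMap.mem_range.1 hp
            rw [LinearMap.add_apply]
            exact Submodule.add_mem_sup (LinearMap.mem_range_self a m)
              (LinearMap.mem_range_self b m)
          exact Submodule.finiteDimensional_of_le hle
        neg_mem' := by
          rintro a ⟨haA, haF⟩
          exact ⟨hnegp _ haA, by rw [LinearMap.range_neg]; exact haF⟩ } with hFdef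
    have : AddSubgroup.closure {x : Mm →ₗ[Δ] Mp |
        ∃ L : AddSubgroup (Mm →ₗ[Δ] Mp), IsMinimalRightIdealP Ap Am L ∧ x ∈ L} ≤ F := by
      refine (AddSubgroup.closure_le _).2 ?_
      rintro x ⟨L, hLmin, hxL⟩
      exact ⟨hLmin.1.1 hxL, minimal_finite hd hLmin x hxL⟩
    exact fun x hx => this hx
  · -- finite rank ⊆ socle
    rintro x ⟨hxAp, hxfin⟩
    haveI := hxfin
    set S : Set (Mm →ₗ[Δ] Mp) := {x : Mm →ₗ[Δ] Mp |
        ∃ L : AddSubgroup (Mm →ₗ[Δ] Mp), IsMinimalRightIdealP Ap Am L ∧ x ∈ L} with hSdef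
    show x ∈ AddSubgroup.closure S
    set k : ℕ := Module.finrank Δ ↥(LinearMap.range x) with hkdef
    set b : Module.Basis (Fin k) Δ ↥(LinearMap.range x) := Module.finBasis Δ ↥(LinearMap.range x)
      with hbdef
    set v : Fin k → Mp := fun i => ((b i : ↥(LinearMap.range x)) : Mp) with hvdef
    have hvind : LinearIndependent Δ v :=
      b.linearIndependent.map' (LinearMap.range x).subtype (Submodule.ker_subtype _)
    have hvmem : ∀ i, ∃ m : Mm, x m = v i := fun i => LinearMap.mem_range.1 (b i).2
    choose u hu using hvmem
    have huind : LinearIndependent Δ u := by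
      apply LinearIndependent.of_comp x
      have : ⇑x ∘ u = v := funext fun i => hu i
      rwa [this]
    obtain ⟨y, hyAm, hy⟩ := hdm k v hvind u
    have hz : ∀ i : Fin k, ∃ z ∈ Ap, ∀ j, z (u j) = if j = i then v i else 0 := by
      intro i
      exact hdp k u huind (fun j => if j = i then v i else 0)
    choose z hzAp hzv using hz
    set t : Fin k → (Mm →ₗ[Δ] Mp) := fun i => (z i) ∘ₗ (y ∘ₗ x) with htdef
    have htAp : ∀ i, t i ∈ Ap := fun i => htp _ (hzAp i) _ hyAm _ hxAp
    have hxm : ∀ m : Mm, x m =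
        ∑ j : Fin k, (b.repr ⟨x m, LinearMap.mem_range_self x m⟩) j • v j := by
      intro m
      have := b.sum_repr ⟨x m, LinearMap.mem_range_self x m⟩
      have := congrArg (Subtype.val) this
      simp only [Submodule.coe_sum, SetLike.val_smul] at this
      exact this.symm
    have hcoef : ∀ (m : Mm) (i : Fin k),
        t i m = (b.repr ⟨x m, LinearMap.mem_range_self x m⟩) i • v i := by
      intro m i
      have h1 : t i m = z i (y (x m)) := rfl
      rw [h1]
      conv_lhs => rw [hxm m]
      rw [map_sum, map_sum]
      have h2 : ∀ j : Fin k,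
          z i (y ((b.repr ⟨x m, LinearMap.mem_range_self x m⟩) j • v j)) =
          if j = i then (b.repr ⟨x m, LinearMap.mem_range_self x m⟩) j • v i else 0 := by
        intro j
        rw [map_smul, map_smul, hy j, hzv i j]
        split <;> simp
      rw [Finset.sum_congr rfl (fun j _ => h2 j)]
      simp
    have hsum : x = ∑ i : Fin k, t i := by
      ext m
      rw [LinearMap.sum_apply]
      rw [Finset.sum_congr rfl (fun i _ => hcoef m i)]
      exact hxm m
    have htS : ∀ i : Fin k, t i ∈ AddSubgroup.closure S := by
      intro i
      by_cases h0 : t i = 0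
      · rw [h0]; exact zero_mem _
      have hvi0 : v i ≠ 0 := by
        intro h
        apply h0
        ext m
        rw [hcoef m i, h, smul_zero, LinearMap.zero_apply]
      have htspan : ∀ m, t i m ∈ Submodule.span Δ {v i} := by
        intro m
        rw [hcoef m i]
        exact Submodule.smul_mem _ _ (Submodule.mem_span_singleton_self _)
      apply AddSubgroup.subset_closure
      refine ⟨idealGen Ap Am (t i), ⟨idealGen_isRightIdeal hd (htAp i), ?_, ?_⟩,
        mem_idealGen_self (t i)⟩
      · intro h
        have := mem_idealGen_self (Ap := Ap) (Am := Am) (t i)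
        rw [h, AddSubgroup.mem_bot] at this
        exact h0 this
      · intro L' hL' hle
        by_cases hbot : L' = ⊥
        · exact Or.inl hbot
        right
        obtain ⟨s, hsL', hs0⟩ : ∃ s ∈ L', s ≠ 0 := by
          by_contra h; push_neg at h
          exact hbot ((AddSubgroup.eq_bot_iff_forall L').2 h)
        obtain ⟨m₀, hsm₀⟩ : ∃ m, s m ≠ 0 := by
          by_contra h; push_neg at h; exact hs0 (LinearMap.ext h)
        have hsspan : s m₀ ∈ Submodule.span Δ {v i} :=
          idealGen_apply_mem htspan s (hle hsL') m₀
        obtain ⟨μ, hμ⟩ := Submodule.mem_span_singleton.1 hsspan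
        have hμ0 : μ ≠ 0 := by
          rintro rfl; rw [zero_smul] at hμ; exact hsm₀ hμ.symm
        obtain ⟨yh, hyhAm, hyh⟩ := hdm 1 ![v i]
          (linearIndependent_unique_iff.2 (by simpa using hvi0)) ![μ⁻¹ • m₀]
        have hyhv : yh (v i) = μ⁻¹ • m₀ := by simpa using hyh 0
        have hsyh : s (yh (v i)) = v i := by
          rw [hyhv, map_smul, ← hμ, smul_smul, inv_mul_cancel₀ hμ0, one_smul]
        have hts : t i = s ∘ₗ (yh ∘ₗ (t i)) := by
          ext m
          simp only [LinearMap.comp_apply]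
          obtain ⟨cm, hcm⟩ := Submodule.mem_span_singleton.1 (htspan m)
          rw [← hcm, map_smul, map_smul, hsyh]
        have htL' : t i ∈ L' := by
          rw [hts]
          exact hL'.2 s hsL' yh hyhAm (t i) (htAp i)
        exact le_antisymm hle (idealGen_le hL' htL')
    rw [hsum]
    exact sum_mem fun i _ => htS i
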